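/- Let B = O[u,v,S,T]/(uv − π, uS + vT) (an integral domain), and let B_v denote the localization of B at the powers of the image of v. Then the O-algebra homomorphism O[U,V,X] → B_v defined by U ↦ u, V ↦ v, X ↦ S/v has kernel exactly the principal ideal (UV − π); moreover, in B_v one has T = −u·(S/v), so that the ideal generated by the images of T and u in the image subalgebra is principal, generated by u. In particular the blow-up chart B[S/v] of B is isomorphic as an O-algebra to O[U,V,X]/(UV − π). -/

import Mathlib

open MvPolynomial

noncomputable section

/-- A linear polynomial `C a * X - C b` with `a ≠ 0`, `b ≠ 0` and `a, b` having only
unit common divisors is irreducible. -/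
lemma irreducible_C_mul_X_sub_C {R : Type*} [CommRing R] [IsDomain R] {a b : R}
    (ha : a ≠ 0) (_hb : b ≠ 0) (h : ∀ d : R, d ∣ a → d ∣ b → IsUnit d) :
    Irreducible (Polynomial.C a * Polynomial.X - Polynomial.C b) := by
  set p : Polynomial R := Polynomial.C a * Polynomial.X - Polynomial.C b with hp
  have hdeg : p.natDegree = 1 := by
    rw [hp, sub_eq_add_neg, ← Polynomial.C_neg]
    exact Polynomial.natDegree_linear ha
  have hp0 : p ≠ 0 := fun h0 => by simp [h0] at hdeg
  have hc1 : p.coeff 1 = a := by simp [hp]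
  have hc0 : p.coeff 0 = -b := by simp [hp]
  constructor
  · exact Polynomial.not_isUnit_of_natDegree_pos p (by omega)
  · intro f g hfg
    have hf0 : f ≠ 0 := fun h0 => hp0 (by rw [hfg, h0, zero_mul])
    have hg0 : g ≠ 0 := fun h0 => hp0 (by rw [hfg, h0, mul_zero])
    have hsum : f.natDegree + g.natDegree = 1 := by
      rw [← Polynomial.natDegree_mul hf0 hg0, ← hfg, hdeg]
    have key : ∀ f g : Polynomial R, p = f * g → g.natDegree = 0 → IsUnit g := by
      intro f g hfg hgdeg
      obtain ⟨c, rfl⟩ : ∃ c, g = Polynomial.C c :=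
        ⟨g.coeff 0, Polynomial.eq_C_of_natDegree_eq_zero hgdeg⟩
      have hca : c ∣ a := by
        refine ⟨f.coeff 1, ?_⟩
        rw [← hc1, hfg, Polynomial.coeff_mul_C, mul_comm]
      have hcb : c ∣ b := by
        refine ⟨-(f.coeff 0), ?_⟩
        have : p.coeff 0 = f.coeff 0 * c := by rw [hfg, Polynomial.coeff_mul_C]
        rw [hc0] at this
        linear_combination -this
      exact (Polynomial.isUnit_C).mpr (h c hca hcb)
    rcases Nat.eq_zero_or_pos f.natDegree with hf | hf
    · exact Or.inl (key g f (by rw [hfg, mul_comm]) hf)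
    · exact Or.inr (key f g hfg (by omega))

/-- `X 0` is prime in `MvPolynomial (Fin 2) O`. -/
lemma prime_X0_fin2 {O : Type*} [CommRing O] [IsDomain O] :
    Prime (X 0 : MvPolynomial (Fin 2) O) := by
  rw [← MulEquiv.prime_iff (finSuccEquiv O 1).toMulEquiv]
  have : (finSuccEquiv O 1).toMulEquiv (X 0) = Polynomial.X := finSuccEquiv_X_zero
  rw [this]
  exact Polynomial.prime_X

lemma prime_UV_sub_pi {O : Type*} [CommRing O] [IsDomain O]
    [UniqueFactorizationMonoid O] {π : O} (hπ0 : π ≠ 0) :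
    Prime (X 0 * X 1 - C π : MvPolynomial (Fin 3) O) := by
  rw [← MulEquiv.prime_iff (finSuccEquiv O 2).toMulEquiv]
  have himg : (finSuccEquiv O 2).toMulEquiv (X 0 * X 1 - C π) =
      Polynomial.C (X 0) * Polynomial.X - Polynomial.C (C π) := by
    show finSuccEquiv O 2 (X 0 * X 1 - C π) = _
    have h1 : (X 1 : MvPolynomial (Fin 3) O) = X (Fin.succ 0) := rfl
    rw [map_sub, map_mul, h1, finSuccEquiv_X_zero, finSuccEquiv_X_succ]
    simp [finSuccEquiv_apply]
  rw [himg]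
  apply UniqueFactorizationMonoid.irreducible_iff_prime.mp
  apply irreducible_C_mul_X_sub_C
  · exact MvPolynomial.X_ne_zero 0
  · intro h0
    exact hπ0 (by simpa using h0)
  · intro d hdX hdC
    rcases (prime_X0_fin2.irreducible.dvd_iff.mp hdX) with hu | hassoc
    · exact hu
    · exfalso
      have hdvd : (X 0 : MvPolynomial (Fin 2) O) ∣ C π := dvd_trans hassoc.dvd hdC
      obtain ⟨g, hg⟩ := hdvd
      have := congrArg constantCoeff hg
      simp at this
      exact hπ0 this


/-- The ideal `(uv - π, uS + vT)` of `O[u,v,S,T]`, with variables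
`u = X 0`, `v = X 1`, `S = X 2`, `T = X 3`. -/
def idealB (O : Type*) [CommRing O] (π : O) : Ideal (MvPolynomial (Fin 4) O) :=
  Ideal.span {X 0 * X 1 - C π, X 0 * X 2 + X 1 * X 3}

/-- The `O`-algebra map `O[U,V,X] → B_v`, `U ↦ u`, `V ↦ v`, `X ↦ S/v`, where `B_v` is
(any model of) the localization of `B = O[u,v,S,T]/(uv - π, uS + vT)` at the powers of
(the image of) `v`. The variables of `O[U,V,X]` are `U = X 0`, `V = X 1`, `X = X 2`. -/
def chartMapV (O : Type*) [CommRing O] (π : O)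
    (Bv : Type*) [CommRing Bv] [Algebra (MvPolynomial (Fin 4) O ⧸ idealB O π) Bv]
    [Algebra O Bv] [IsScalarTower O (MvPolynomial (Fin 4) O ⧸ idealB O π) Bv]
    [IsLocalization.Away (Ideal.Quotient.mk (idealB O π) (X 1)) Bv] :
    MvPolynomial (Fin 3) O →ₐ[O] Bv :=
  MvPolynomial.aeval
    ![algebraMap _ Bv (Ideal.Quotient.mk (idealB O π) (X 0)),
      algebraMap _ Bv (Ideal.Quotient.mk (idealB O π) (X 1)),
      algebraMap _ Bv (Ideal.Quotient.mk (idealB O π) (X 2)) *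
        IsLocalization.Away.invSelf (S := Bv) (Ideal.Quotient.mk (idealB O π) (X 1))]

set_option maxHeartbeats 2000000 in
set_option synthInstance.maxHeartbeats 400000 in
/-- the `O`-algebra map `O[U,V,X] → B_v`, `U ↦ u`, `V ↦ v`, `X ↦ S/v` has
kernel exactly `(UV - π)`; in `B_v` one has `T = -u·(S/v)`, so that the ideal generated by
the images of `T` and `u` in the image subalgebra is principal, generated by `u`; in
particular the blow-up chart `B[S/v]` is `O`-algebra isomorphic to `O[U,V,X]/(UV - π)`. -/
theorem stmt_12 (O : Type*) [CommRing O] [IsDomain O] [IsDiscreteValuationRing O]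
    [IsAdicComplete (IsLocalRing.maximalIdeal O) O]
    (p : ℕ) [Fact p.Prime] (hp : p ≠ 2)
    [IsAlgClosed (IsLocalRing.ResidueField O)] [CharP (IsLocalRing.ResidueField O) p]
    (π : O) (hπ : Irreducible π)
    [IsDomain (MvPolynomial (Fin 4) O ⧸ idealB O π)]
    (Bv : Type*) [CommRing Bv] [Algebra (MvPolynomial (Fin 4) O ⧸ idealB O π) Bv]
    [Algebra O Bv] [IsScalarTower O (MvPolynomial (Fin 4) O ⧸ idealB O π) Bv]
    [IsLocalization.Away (Ideal.Quotient.mk (idealB O π) (X 1)) Bv] :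
    -- the kernel is exactly `(UV - π)`
    RingHom.ker (chartMapV O π Bv : MvPolynomial (Fin 3) O →+* Bv) =
      Ideal.span {X 0 * X 1 - C π} ∧
    -- in `B_v` one has `T = -u · (S/v)`
    algebraMap _ Bv (Ideal.Quotient.mk (idealB O π) (X 3)) =
      -(algebraMap _ Bv (Ideal.Quotient.mk (idealB O π) (X 0)) *
        (algebraMap _ Bv (Ideal.Quotient.mk (idealB O π) (X 2)) *
          IsLocalization.Away.invSelf (S := Bv) (Ideal.Quotient.mk (idealB O π) (X 1)))) ∧
    -- in the image subalgebra, the ideal generated by (the images of) `T` and `u` is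
    -- principal, generated by `u`
    (∀ (hT : algebraMap _ Bv (Ideal.Quotient.mk (idealB O π) (X 3)) ∈
          (chartMapV O π Bv).range)
        (hu : algebraMap _ Bv (Ideal.Quotient.mk (idealB O π) (X 0)) ∈
          (chartMapV O π Bv).range),
      Ideal.span {(⟨_, hT⟩ : (chartMapV O π Bv).range), ⟨_, hu⟩} =
        Ideal.span {(⟨_, hu⟩ : (chartMapV O π Bv).range)}) ∧
    -- the blow-up chart `B[S/v]` is `O`-algebra isomorphic to `O[U,V,X]/(UV - π)`
    Nonempty ((MvPolynomial (Fin 3) O ⧸ Ideal.span {(X 0 * X 1 : MvPolynomial (Fin 3) O) - C π})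
      ≃ₐ[O] (chartMapV O π Bv).range) := by
  
  classical
  have hπ0 : π ≠ 0 := hπ.ne_zero
  set B := MvPolynomial (Fin 4) O ⧸ idealB O π with hB
  set w : Bv := IsLocalization.Away.invSelf (S := Bv) (Ideal.Quotient.mk (idealB O π) (X 1))
    with hw
  have hv1 : algebraMap B Bv (Ideal.Quotient.mk (idealB O π) (X 1)) * w = 1 :=
    IsLocalization.Away.mul_invSelf _
  -- the relation `uS + vT = 0` in `Bv`
  have hrel0 : Ideal.Quotient.mk (idealB O π) (X 0 * X 2 + X 1 * X 3) = 0 :=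
    Ideal.Quotient.eq_zero_iff_mem.mpr (Ideal.subset_span (Set.mem_insert_of_mem _ rfl))
  have hrel : algebraMap B Bv (Ideal.Quotient.mk (idealB O π) (X 0)) *
        algebraMap B Bv (Ideal.Quotient.mk (idealB O π) (X 2)) +
      algebraMap B Bv (Ideal.Quotient.mk (idealB O π) (X 1)) *
        algebraMap B Bv (Ideal.Quotient.mk (idealB O π) (X 3)) = 0 := by
    have := congrArg (algebraMap B Bv) hrel0
    simpa using this
  -- Part 2
  have hT : algebraMap B Bv (Ideal.Quotient.mk (idealB O π) (X 3)) =
      -(algebraMap B Bv (Ideal.Quotient.mk (idealB O π) (X 0)) *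
        (algebraMap B Bv (Ideal.Quotient.mk (idealB O π) (X 2)) * w)) := by
    linear_combination (-(algebraMap B Bv (Ideal.Quotient.mk (idealB O π) (X 3)))) * hv1
      + w * hrel
  -- values of chartMapV on the variables
  have hX0 : chartMapV O π Bv (X 0) =
      algebraMap B Bv (Ideal.Quotient.mk (idealB O π) (X 0)) := by
    simp [chartMapV]
    rfl
  have hX1 : chartMapV O π Bv (X 1) =
      algebraMap B Bv (Ideal.Quotient.mk (idealB O π) (X 1)) := by
    simp [chartMapV]
    rfl
  have hX2 : chartMapV O π Bv (X 2) =
      algebraMap B Bv (Ideal.Quotient.mk (idealB O π) (X 2)) * w := by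
    simp [chartMapV, hw]
    rfl
  -- the prime `P = UV - π` and the model chart ring `A`
  have hPprime : Prime (X 0 * X 1 - C π : MvPolynomial (Fin 3) O) := prime_UV_sub_pi hπ0
  haveI hIP : (Ideal.span {(X 0 * X 1 - C π : MvPolynomial (Fin 3) O)}).IsPrime :=
    (Ideal.span_singleton_prime hPprime.ne_zero).mpr hPprime
  set J : Ideal (MvPolynomial (Fin 3) O) := Ideal.span {X 0 * X 1 - C π} with hJ
  set A := MvPolynomial (Fin 3) O ⧸ J with hA
  set mkA : MvPolynomial (Fin 3) O →+* A := Ideal.Quotient.mk J with hmkA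
  -- the map `φ0 : O[u,v,S,T] → A`,  `u ↦ U, v ↦ V, S ↦ XV, T ↦ -XU`
  set φ0 : MvPolynomial (Fin 4) O →ₐ[O] A :=
    aeval ![mkA (X 0), mkA (X 1), mkA (X 2) * mkA (X 1), -(mkA (X 2) * mkA (X 0))] with hφ0
  have hφ0X : ∀ i : Fin 4, φ0 (X i) =
      ![mkA (X 0), mkA (X 1), mkA (X 2) * mkA (X 1), -(mkA (X 2) * mkA (X 0))] i :=
    fun i => aeval_X _ i
  have halgA : ∀ r : O, algebraMap O A r = mkA (C r) := fun r => rfl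
  have hgen1 : φ0 (X 0 * X 1 - C π) = 0 := by
    have h0 : mkA (X 0 * X 1 - C π) = 0 :=
      Ideal.Quotient.eq_zero_iff_mem.mpr (Ideal.subset_span rfl)
    calc φ0 (X 0 * X 1 - C π) = mkA (X 0) * mkA (X 1) - algebraMap O A π := by
          rw [map_sub, map_mul, hφ0X, hφ0X, aeval_C]
          rfl
      _ = mkA (X 0 * X 1 - C π) := by rw [halgA, map_sub, map_mul]
      _ = 0 := h0
  have hgen2 : φ0 (X 0 * X 2 + X 1 * X 3) = 0 := by
    rw [map_add, map_mul, map_mul, hφ0X, hφ0X, hφ0X, hφ0X]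
    show mkA (X 0) * (mkA (X 2) * mkA (X 1)) + mkA (X 1) * (-(mkA (X 2) * mkA (X 0))) = 0
    ring
  have hkerφ0 : ∀ a ∈ idealB O π, φ0 a = 0 := by
    have hle : idealB O π ≤ RingHom.ker φ0.toRingHom := by
      rw [idealB, Ideal.span_le]
      rintro x hx
      simp only [Set.mem_insert_iff, Set.mem_singleton_iff] at hx
      rw [SetLike.mem_coe, RingHom.mem_ker]
      rcases hx with rfl | rfl
      · exact hgen1
      · exact hgen2
    exact fun a ha => hle ha
  -- the lifted map `φ : B → A`
  set φ : B →ₐ[O] A := Ideal.Quotient.liftₐ (idealB O π) φ0 hkerφ0 with hφ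
  have hφmk : ∀ x : MvPolynomial (Fin 4) O, φ (Ideal.Quotient.mk (idealB O π) x) = φ0 x :=
    fun x => Ideal.Quotient.liftₐ_apply _ _ _ _
  have hφ0' : φ (Ideal.Quotient.mk (idealB O π) (X 0)) = mkA (X 0) := by
    rw [hφmk, hφ0X]; rfl
  have hφ1' : φ (Ideal.Quotient.mk (idealB O π) (X 1)) = mkA (X 1) := by
    rw [hφmk, hφ0X]; rfl
  have hφ2' : φ (Ideal.Quotient.mk (idealB O π) (X 2)) = mkA (X 2) * mkA (X 1) := by
    rw [hφmk, hφ0X]; rfl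
  -- the localization `A_V` and the induced map `φv : Bv → A_V`
  set AV := Localization.Away (mkA (X 1)) with hAV
  have hV0 : mkA (X 1) ≠ 0 := by
    intro h0
    rw [hmkA, Ideal.Quotient.eq_zero_iff_mem, hJ, Ideal.mem_span_singleton] at h0
    obtain ⟨c, hc⟩ := h0
    have := congrArg (aeval (![π, 1, 0] : Fin 3 → O)) hc
    simp at this
  have injL : Function.Injective (algebraMap A AV) :=
    IsLocalization.injective AV (powers_le_nonZeroDivisors_of_noZeroDivisors hV0)
  have hgv : IsUnit (((algebraMap A AV).comp φ.toRingHom)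
      (Ideal.Quotient.mk (idealB O π) (X 1))) := by
    rw [RingHom.comp_apply]
    show IsUnit (algebraMap A AV (φ (Ideal.Quotient.mk (idealB O π) (X 1))))
    rw [hφ1']
    exact IsLocalization.map_units AV ⟨mkA (X 1), Submonoid.mem_powers _⟩
  set φv : Bv →+* AV :=
    IsLocalization.Away.lift (S := Bv) (g := (algebraMap A AV).comp φ.toRingHom)
      (Ideal.Quotient.mk (idealB O π) (X 1)) hgv with hφv
  have hφvB : ∀ b : B, φv (algebraMap B Bv b) = algebraMap A AV (φ b) := fun b =>
    IsLocalization.Away.lift_eq _ hgv b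
  have hwV : algebraMap A AV (mkA (X 1)) * φv w = 1 := by
    have := congrArg φv hv1
    rw [map_mul, map_one, hφvB, hφ1'] at this
    exact this
  -- φv ∘ chartMapV = algebraMap ∘ mkA
  have hcomp : ∀ f : MvPolynomial (Fin 3) O,
      φv (chartMapV O π Bv f) = algebraMap A AV (mkA f) := by
    intro f
    induction f using MvPolynomial.induction_on with
    | C r =>
        have hCr : chartMapV O π Bv (C r) = algebraMap O Bv r := by simp [chartMapV]
        rw [hCr]
        show φv (algebraMap O Bv r) = algebraMap A AV (mkA (C r))
        rw [IsScalarTower.algebraMap_apply O B Bv, hφvB]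
        congr 1
        show φ (algebraMap O B r) = mkA (C r)
        rw [← halgA]
        exact φ.commutes r
    | add f g hf hg => simp only [map_add, hf, hg]
    | mul_X f i hf =>
        have hXall : φv (chartMapV O π Bv (X i)) = algebraMap A AV (mkA (X i)) := by
          fin_cases i
          · show φv (chartMapV O π Bv (X 0)) = algebraMap A AV (mkA (X 0))
            rw [hX0, hφvB, hφ0']
          · show φv (chartMapV O π Bv (X 1)) = algebraMap A AV (mkA (X 1))
            rw [hX1, hφvB, hφ1']
          · show φv (chartMapV O π Bv (X 2)) = algebraMap A AV (mkA (X 2))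
            rw [hX2, map_mul, hφvB, hφ2', map_mul, mul_assoc, hwV, mul_one]
        rw [map_mul, map_mul, map_mul, hf, hXall, map_mul]
  -- Part 1: the kernel is exactly `(UV - π)`
  have hker_eq : RingHom.ker (chartMapV O π Bv : MvPolynomial (Fin 3) O →+* Bv) = J := by
    apply le_antisymm
    · intro f hf
      rw [RingHom.mem_ker] at hf
      replace hf : chartMapV O π Bv f = 0 := hf
      have h1 : algebraMap A AV (mkA f) = 0 := by rw [← hcomp, hf, map_zero]
      have h2 : mkA f = 0 := injL (by rw [h1, map_zero])
      rwa [hmkA, Ideal.Quotient.eq_zero_iff_mem] at h2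
    · rw [hJ, Ideal.span_le]
      intro x hx
      rw [Set.mem_singleton_iff] at hx
      subst hx
      rw [SetLike.mem_coe, RingHom.mem_ker]
      show chartMapV O π Bv (X 0 * X 1 - C π) = 0
      have hCpi : chartMapV O π Bv (C π) = algebraMap O Bv π := by simp [chartMapV]
      have hmem : (X 0 * X 1 - C π : MvPolynomial (Fin 4) O) ∈ idealB O π :=
        Ideal.subset_span (Set.mem_insert _ _)
      have hz : Ideal.Quotient.mk (idealB O π) (X 0 * X 1 - C π) = 0 :=
        Ideal.Quotient.eq_zero_iff_mem.mpr hmem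
      have hz' := congrArg (algebraMap B Bv) hz
      rw [map_zero, map_sub, map_mul] at hz'
      have hOB : algebraMap O B π = Ideal.Quotient.mk (idealB O π) (C π) := rfl
      calc chartMapV O π Bv (X 0 * X 1 - C π)
          = algebraMap B Bv (Ideal.Quotient.mk (idealB O π) (X 0)) *
              algebraMap B Bv (Ideal.Quotient.mk (idealB O π) (X 1)) -
            algebraMap O Bv π := by rw [map_sub, map_mul, hX0, hX1, hCpi]
        _ = 0 := by
            rw [IsScalarTower.algebraMap_apply O B Bv, hOB]
            simpa [map_sub, map_mul] using hz'
  refine ⟨by rw [hker_eq, hJ], hT, ?_, ?_⟩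
  -- Part 3
  · intro hTm hum
    apply le_antisymm
    · rw [Ideal.span_le]
      rintro x hx
      simp only [Set.mem_insert_iff, Set.mem_singleton_iff] at hx
      rcases hx with rfl | rfl
      · rw [SetLike.mem_coe, Ideal.mem_span_singleton]
        refine ⟨⟨chartMapV O π Bv (-(X 2)), ⟨-(X 2), rfl⟩⟩, ?_⟩
        apply Subtype.ext
        show algebraMap B Bv (Ideal.Quotient.mk (idealB O π) (X 3)) =
          algebraMap B Bv (Ideal.Quotient.mk (idealB O π) (X 0)) * chartMapV O π Bv (-(X 2))
        rw [map_neg, hX2, hT]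
        ring
      · exact Ideal.subset_span rfl
    · exact Ideal.span_mono (fun x hx => by
        rw [Set.mem_singleton_iff] at hx; subst hx; exact Set.mem_insert_of_mem _ rfl)
  -- Part 4
  · refine ⟨(Ideal.quotientEquivAlgOfEq O ?_).trans
      (Ideal.quotientKerAlgEquivOfSurjective ((chartMapV O π Bv).rangeRestrict_surjective))⟩
    rw [AlgHom.ker_rangeRestrict]
    exact hker_eq.symm
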